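/- Let A and B be real symmetric positive semidefinite m×m matrices. Then tr( (B^{1/2} A B^{1/2})^{1/2} ) ≤ (tr A + tr B) / 2, where M^{1/2} denotes the positive semidefinite square root of a positive semidefinite matrix M. Equivalently, the covariance part of the squared Bures metric, 𝒱²(A, B) = tr( A + B − 2 (B^{1/2} A B^{1/2})^{1/2} ), is nonnegative. -/

import Mathlib

open Matrix

section

open scoped ComplexOrder

/-- The positive semidefinite square root of a positive semidefinite matrix, as defined in
Mathlib (December 2024); the definition has since been removed from Mathlib. -/
noncomputable def Matrix.PosSemidef.sqrt {n 𝕜 : Type*} [Fintype n] [RCLike 𝕜] [DecidableEq n]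
    {A : Matrix n n 𝕜} (hA : A.PosSemidef) : Matrix n n 𝕜 :=
  hA.1.eigenvectorUnitary.1 * diagonal ((↑) ∘ (√·) ∘ hA.1.eigenvalues) *
  (star hA.1.eigenvectorUnitary : Matrix n n 𝕜)

end

/-! With `X = A^{1/2}` and `Y = B^{1/2}` the matrix `S = (B^{1/2} A B^{1/2})^{1/2}` is the modulus
of `XᴴY`. A polar decomposition `S = Vᴴ Xᴴ Y` with `V Vᴴ` an orthogonal projection gives
`2 tr S = tr((XV)ᴴY) + tr(Yᴴ(XV)) ≤ tr((XV)ᴴ(XV)) + tr(YᴴY) ≤ tr(XᴴX) + tr(YᴴY) = tr A + tr B`,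
the first inequality from `0 ≤ tr((XV - Y)ᴴ(XV - Y))`, the second because `V` is a partial
isometry. -/

namespace Matrix

open scoped ComplexOrder

variable {l m n 𝕜 : Type*} [Fintype l] [Fintype m] [Fintype n] [RCLike 𝕜]

theorem trace_conjTranspose_mul_add_le (X Y : Matrix m n 𝕜) :
    (Xᴴ * Y).trace + (Yᴴ * X).trace ≤ (Xᴴ * X).trace + (Yᴴ * Y).trace := by
  have hexpand : (X - Y)ᴴ * (X - Y) = Xᴴ * X + Yᴴ * Y - (Xᴴ * Y + Yᴴ * X) := by
    rw [conjTranspose_sub, Matrix.sub_mul, Matrix.mul_sub, Matrix.mul_sub]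
    abel
  have hnonneg := (posSemidef_conjTranspose_mul_self (X - Y)).trace_nonneg
  rwa [hexpand, trace_sub, trace_add, trace_add, sub_nonneg] at hnonneg

variable [DecidableEq n]

theorem trace_conjTranspose_mul_self_mul_le {V : Matrix n l 𝕜}
    (hV : IsStarProjection (V * Vᴴ)) (X : Matrix m n 𝕜) :
    ((X * V)ᴴ * (X * V)).trace ≤ (Xᴴ * X).trace := by
  set P := V * Vᴴ
  have hQ : IsStarProjection (1 - P) := hV.one_sub
  have hexpand : X * (1 - P) * (X * (1 - P))ᴴ = X * Xᴴ - X * P * Xᴴ := by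
    rw [conjTranspose_mul, hQ.isSelfAdjoint.isHermitian.eq, Matrix.mul_assoc,
      ← Matrix.mul_assoc (1 - P), hQ.isIdempotentElem.eq, Matrix.sub_mul, Matrix.one_mul,
      Matrix.mul_sub, Matrix.mul_assoc X P]
  have hle := (posSemidef_self_mul_conjTranspose (X * (1 - P))).trace_nonneg
  rw [hexpand, trace_sub, sub_nonneg] at hle
  calc ((X * V)ᴴ * (X * V)).trace = (X * P * Xᴴ).trace := by
        rw [trace_mul_comm, conjTranspose_mul]
        simp only [P, Matrix.mul_assoc]
    _ ≤ (X * Xᴴ).trace := hle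
    _ = (Xᴴ * X).trace := trace_mul_comm _ _

variable {M : Matrix n n 𝕜}

theorem PosSemidef.sqrt_eq_cfc (hM : M.PosSemidef) : hM.sqrt = cfc Real.sqrt M := by
  rw [hM.1.cfc_eq]
  rfl

theorem PosSemidef.isHermitian_sqrt (hM : M.PosSemidef) : hM.sqrt.IsHermitian :=
  hM.sqrt_eq_cfc ▸ cfc_predicate _ M

theorem PosSemidef.sqrt_mul_sqrt (hM : M.PosSemidef) : hM.sqrt * hM.sqrt = M := by
  have hspec : ∀ x ∈ spectrum ℝ M, 0 ≤ x := by
    rw [hM.1.spectrum_real_eq_range_eigenvalues]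
    rintro - ⟨i, rfl⟩
    exact hM.eigenvalues_nonneg i
  rw [hM.sqrt_eq_cfc, ← cfc_mul .., cfc_congr fun x hx => Real.mul_self_sqrt (hspec x hx),
    cfc_id' ℝ M hM.1.isSelfAdjoint]

theorem exists_isStarProjection_conjTranspose_mul_eq_sqrt (C : Matrix m n 𝕜)
    (hM : M.PosSemidef) (hCM : Cᴴ * C = M) :
    ∃ V : Matrix m n 𝕜, IsStarProjection (V * Vᴴ) ∧ Vᴴ * C = hM.sqrt := by
  have hcont (f : ℝ → ℝ) : ContinuousOn f (spectrum ℝ M) :=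
    M.finite_real_spectrum.continuousOn _
  -- `N` is the pseudo-inverse of `√M`; thanks to `0⁻¹ = 0` the identities below hold on all of `ℝ`.
  set N := cfc (fun x => (√x)⁻¹) M
  have hN : Nᴴ = N := (cfc_predicate (p := IsSelfAdjoint) _ M).isHermitian
  have hNM : N * M = hM.sqrt := by
    conv_lhs => rw [← cfc_id' ℝ M hM.1.isSelfAdjoint]
    rw [hM.sqrt_eq_cfc, ← cfc_mul _ _ M (hcont _) (hcont _)]
    exact cfc_congr fun x _ => by rw [inv_mul_eq_div, Real.div_sqrt]
  have hNSN : N * hM.sqrt * N = N := by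
    rw [hM.sqrt_eq_cfc, ← cfc_mul _ _ M (hcont _) (hcont _),
      ← cfc_mul _ _ M (hcont _) (hcont _)]
    exact cfc_congr fun x _ => by simpa using mul_inv_mul_cancel (√x)⁻¹
  refine ⟨C * N, ⟨?idempotent, (isHermitian_mul_conjTranspose_self _).isSelfAdjoint⟩, ?_⟩
  case idempotent =>
    show C * N * (C * N)ᴴ * (C * N * (C * N)ᴴ) = C * N * (C * N)ᴴ
    rw [conjTranspose_mul, hN]
    calc C * N * (N * Cᴴ) * (C * N * (N * Cᴴ)) = C * (N * (N * (Cᴴ * C)) * N * N) * Cᴴ := by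
          simp only [Matrix.mul_assoc]
      _ = C * N * (N * Cᴴ) := by
          rw [hCM, hNM, hNSN]
          simp only [Matrix.mul_assoc]
  rw [conjTranspose_mul, hN, Matrix.mul_assoc, hCM, hNM]

theorem two_mul_trace_sqrt_le (X : Matrix m n 𝕜) (Y : Matrix m l 𝕜) {M : Matrix l l 𝕜}
    [DecidableEq l] (hM : M.PosSemidef) (hXY : (Xᴴ * Y)ᴴ * (Xᴴ * Y) = M) :
    2 * hM.sqrt.trace ≤ (Xᴴ * X).trace + (Yᴴ * Y).trace := by
  obtain ⟨V, hV, hVS⟩ := exists_isStarProjection_conjTranspose_mul_eq_sqrt (Xᴴ * Y) hM hXY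
  have hWY : (X * V)ᴴ * Y = hM.sqrt := by
    rw [conjTranspose_mul, Matrix.mul_assoc, hVS]
  have hYW : Yᴴ * (X * V) = hM.sqrt := by
    rw [← conjTranspose_conjTranspose (Yᴴ * (X * V)), conjTranspose_mul,
      conjTranspose_conjTranspose, hWY, hM.isHermitian_sqrt]
  calc 2 * hM.sqrt.trace = ((X * V)ᴴ * Y).trace + (Yᴴ * (X * V)).trace := by
        rw [hWY, hYW, two_mul]
    _ ≤ ((X * V)ᴴ * (X * V)).trace + (Yᴴ * Y).trace := trace_conjTranspose_mul_add_le _ _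
    _ ≤ (Xᴴ * X).trace + (Yᴴ * Y).trace := by
        gcongr
        exact trace_conjTranspose_mul_self_mul_le hV X

end Matrix

theorem trace_sqrt_middle_le_avg_trace
    {m : ℕ} (A B : Matrix (Fin m) (Fin m) ℝ)
    (hA : A.PosSemidef) (hB : B.PosSemidef)
    (hMid : (hB.sqrt * A * hB.sqrt).PosSemidef) :
    hMid.sqrt.trace ≤ (A.trace + B.trace) / 2 ∧
    0 ≤ (A + B - 2 • hMid.sqrt).trace := by
  have hMid_eq : (hA.sqrtᴴ * hB.sqrt)ᴴ * (hA.sqrtᴴ * hB.sqrt) = hB.sqrt * A * hB.sqrt := by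
    rw [hA.isHermitian_sqrt, conjTranspose_mul, hA.isHermitian_sqrt, hB.isHermitian_sqrt,
      ← Matrix.mul_assoc, Matrix.mul_assoc hB.sqrt, hA.sqrt_mul_sqrt]
  have key := two_mul_trace_sqrt_le _ _ hMid hMid_eq
  rw [hA.isHermitian_sqrt, hB.isHermitian_sqrt, hA.sqrt_mul_sqrt, hB.sqrt_mul_sqrt] at key
  have htr : (A + B - 2 • hMid.sqrt).trace = A.trace + B.trace - 2 * hMid.sqrt.trace := by
    rw [trace_sub, trace_add, trace_smul, nsmul_eq_mul, Nat.cast_ofNat]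
  constructor <;> linarith
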